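/- Let μ be a nonnegative locally finite Borel measure on ℝⁿ, p > 1, ε ∈ (0,1), α₁ > 0, R > 0, and x ∈ ℝⁿ. Set h(x,t) = (μ(B_t(x))/t^{n-1})^{1/(p-1)} and h̃(x,t) = Σ_{i=1}^∞ ε^{α₁ i} ( h(x, ε^{-i} t)[ε^{-i}t ≤ R/2] + h(x, R/2)[ε^{-i}t > R/2] ). Then for every ρ ∈ (0, R/2], ∫_0^ρ h̃(x,t)/t dt ≤ W̃^ρ_{1/p,p}(μ)(x) + C (ρ/R)^{α₁} W^R_{1/p,p}(μ)(x), where W̃^ρ_{1/p,p}(μ)(x) = Σ_{i=1}^∞ ε^{α₁ i} ( W^{ε^{-i}ρ}_{1/p,p}(μ)(x)[ε^{-i}ρ ≤ R/2] + W^{R/2}_{1/p,p}(μ)(x)[ε^{-i}ρ > R/2] ) and C depends only on ε and α₁. -/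

import Mathlib

/-!
Write the `i`-th summand of `h̃` as `h(x, min (ε^{-i} t) (R/2))`. The substitution `s = ε^{-i} t`
preserves `dt/t`, and splitting at `s = R/2` turns its integral over `(0, ρ)` into the truncated
potential `W^{min (ε^{-i} ρ) (R/2)}` plus the overflow `h(x, R/2) log⁺ (2 ε^{-i} ρ / R)`.
Since `t ↦ μ(B_t(x))` is nondecreasing, `h(x, R/2)` is at most a constant times
`∫_{R/2}^R h(x,t) dt/t ≤ W^R`. Finally `s^{α₁} log (a/s) ≤ (2/α₁) a^{α₁/2} s^{α₁/2}`, and only the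
terms with `ε^i < a` are nonzero, so the weighted overflow logarithms sum to a geometric tail
of size `O(a^{α₁})` with `a = 2ρ/R`.
-/

open MeasureTheory Metric Set
open scoped ENNReal

/-- `h(x,t) = (μ(B_t(x))/t^{n-1})^{1/(p-1)}`, the Wolff potential integrand. -/
noncomputable def wolffIntegrand (n : ℕ) (p : ℝ) (μ : Measure (EuclideanSpace ℝ (Fin n)))
    (x : EuclideanSpace ℝ (Fin n)) (t : ℝ) : ℝ≥0∞ :=
  (μ (ball x t) / ENNReal.ofReal (t ^ ((n:ℝ) - 1))) ^ (1 / (p - 1))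

/-- The truncated Wolff potential `W^ρ_{1/p,p}(μ)(x) = ∫_0^ρ h(x,t) dt/t`. -/
noncomputable def wolffPotential (n : ℕ) (p : ℝ) (μ : Measure (EuclideanSpace ℝ (Fin n)))
    (x : EuclideanSpace ℝ (Fin n)) (ρ : ℝ) : ℝ≥0∞ :=
  ∫⁻ t in Ioo (0:ℝ) ρ, wolffIntegrand n p μ x t / ENNReal.ofReal t

theorem setLIntegral_Ioo_comp_mul_div (f : ℝ → ℝ≥0∞) {c : ℝ} (hc : 0 < c) (ρ : ℝ) :
    ∫⁻ t in Ioo 0 ρ, f (c * t) / ENNReal.ofReal t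
      = ∫⁻ s in Ioo 0 (c * ρ), f s / ENNReal.ofReal s := by
  have himage : (c * ·) '' Ioo 0 ρ = Ioo 0 (c * ρ) := by rw [image_mul_left_Ioo hc, mul_zero]
  rw [← himage, lintegral_image_eq_lintegral_abs_deriv_mul measurableSet_Ioo
    (fun t _ => ((hasDerivAt_id' t).const_mul c).hasDerivWithinAt)
    (mul_right_injective₀ hc.ne').injOn]
  refine setLIntegral_congr_fun measurableSet_Ioo fun t _ => ?_
  have hc' : ENNReal.ofReal c ≠ 0 := by simpa using hc
  rw [mul_one, abs_of_pos hc, ENNReal.ofReal_mul hc.le, ← mul_div_assoc,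
    ENNReal.mul_div_mul_left _ _ hc' ENNReal.ofReal_ne_top]

theorem setLIntegral_Ioo_inv_ofReal {a b : ℝ} (ha : 0 < a) (hab : a ≤ b) :
    ∫⁻ t in Ioo a b, (ENNReal.ofReal t)⁻¹ = ENNReal.ofReal (Real.log (b / a)) := by
  have hpos : ∀ t ∈ Ioo a b, 0 < t := fun t ht => ha.trans ht.1
  rw [setLIntegral_congr_fun measurableSet_Ioo fun t ht =>
    (ENNReal.ofReal_inv_of_pos (hpos t ht)).symm]
  have hint : IntegrableOn (fun t : ℝ => t⁻¹) (Ioo a b) :=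
    (intervalIntegral.intervalIntegrable_inv
      (fun t ht => (ha.trans_le (uIcc_of_le hab ▸ ht).1).ne') continuousOn_id).1.mono_set
      Ioo_subset_Ioc_self
  rw [← ofReal_integral_eq_lintegral_ofReal hint
    (ae_restrict_of_forall_mem measurableSet_Ioo fun t ht => (inv_pos.2 (hpos t ht)).le),
    ← integral_Ioc_eq_integral_Ioo, ← intervalIntegral.integral_of_le hab,
    integral_inv_of_pos ha (ha.trans_le hab)]

theorem setLIntegral_Ioo_comp_min_div (f : ℝ → ℝ≥0∞) {a b : ℝ} (ha : 0 < a) (hb : 0 ≤ b) :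
    ∫⁻ s in Ioo 0 b, f (min s a) / ENNReal.ofReal s
      = (∫⁻ s in Ioo 0 (min b a), f s / ENNReal.ofReal s)
        + f a * ENNReal.ofReal (Real.log (b / a)) := by
  rcases le_or_gt b a with hba | hab
  · have hlog : Real.log (b / a) ≤ 0 :=
      Real.log_nonpos (div_nonneg hb ha.le) ((div_le_one ha).2 hba)
    simp only [min_eq_left hba, ENNReal.ofReal_of_nonpos hlog, mul_zero, add_zero]
    exact setLIntegral_congr_fun measurableSet_Ioo fun s hs => by
      rw [min_eq_left (hs.2.le.trans hba)]
  · have hlow : ∫⁻ s in Ioo 0 a, f (min s a) / ENNReal.ofReal s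
        = ∫⁻ s in Ioo 0 a, f s / ENNReal.ofReal s :=
      setLIntegral_congr_fun measurableSet_Ioo fun s hs => by rw [min_eq_left hs.2.le]
    have hhigh : ∫⁻ s in Ico a b, f (min s a) / ENNReal.ofReal s
        = f a * ENNReal.ofReal (Real.log (b / a)) := by
      rw [setLIntegral_congr_fun measurableSet_Ico fun s hs => by
          rw [min_eq_right hs.1, div_eq_mul_inv],
        lintegral_const_mul _ (by fun_prop), Measure.restrict_congr_set Ioo_ae_eq_Ico.symm,
        setLIntegral_Ioo_inv_ofReal ha hab.le]
    rw [min_eq_right hab.le, ← Ioo_union_Ico_eq_Ioo ha hab.le,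
      lintegral_union measurableSet_Ico (Ico_disjoint_Ico_same.mono_left Ioo_subset_Ico_self),
      hlow, hhigh]

theorem lintegral_tsum_mul_div {α : Type*} [MeasurableSpace α] {μ : Measure α}
    {f : ℕ → α → ℝ≥0∞} {g : α → ℝ≥0∞} (hf : ∀ i, Measurable (f i)) (hg : Measurable g)
    (c : ℕ → ℝ≥0∞) :
    ∫⁻ t, (∑' i, c i * f i t) / g t ∂μ = ∑' i, c i * ∫⁻ t, f i t / g t ∂μ := by
  simp_rw [div_eq_mul_inv, ← ENNReal.tsum_mul_right, mul_assoc]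
  rw [lintegral_tsum fun i => by fun_prop]
  exact tsum_congr fun i => lintegral_const_mul _ (by fun_prop)

theorem setLIntegral_Ioo_tsum_comp_min_mul_div {f : ℝ → ℝ≥0∞} (hf : Measurable f) {a ρ : ℝ}
    (ha : 0 < a) (hρ : 0 ≤ ρ) (w : ℕ → ℝ≥0∞) {c : ℕ → ℝ} (hc : ∀ i, 0 < c i) :
    ∫⁻ t in Ioo 0 ρ, (∑' i, w i * f (min (c i * t) a)) / ENNReal.ofReal t
      = (∑' i, w i * ∫⁻ s in Ioo 0 (min (c i * ρ) a), f s / ENNReal.ofReal s)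
        + f a * ∑' i, w i * ENNReal.ofReal (Real.log (c i * ρ / a)) := by
  rw [lintegral_tsum_mul_div (fun i => by fun_prop) (by fun_prop)]
  simp_rw [setLIntegral_Ioo_comp_mul_div (fun s => f (min s a)) (hc _),
    setLIntegral_Ioo_comp_min_div f ha (mul_nonneg (hc _).le hρ), mul_add, ENNReal.tsum_add,
    ← ENNReal.tsum_mul_left, mul_left_comm]

theorem ENNReal.tsum_ite_pow_lt_le {r : ℝ≥0∞} (hr : r ≤ 1) (b : ℝ≥0∞) :
    ∑' i : ℕ, (if r ^ i < b then r ^ i else 0) ≤ b * (1 - r)⁻¹ := by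
  classical
  by_cases h : ∃ i, r ^ i < b
  · have hbelow : ∀ i < Nat.find h, (if r ^ i < b then r ^ i else 0) = 0 := fun i hi =>
      if_neg (Nat.find_min h hi)
    have habove : ∀ k, (if r ^ (k + Nat.find h) < b then r ^ (k + Nat.find h) else 0)
        = r ^ Nat.find h * r ^ k := fun k => by
      rw [if_pos ((pow_le_pow_right_of_le_one' hr (Nat.le_add_left _ k)).trans_lt
        (Nat.find_spec h)), pow_add, mul_comm]
    rw [(ENNReal.summable.hasSum.sum_range_add (k := Nat.find h)).tsum_eq,
      Finset.sum_eq_zero fun i hi => hbelow i (Finset.mem_range.1 hi), zero_add,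
      tsum_congr habove, ENNReal.tsum_mul_left, ENNReal.tsum_geometric]
    gcongr
    exact (Nat.find_spec h).le
  · simp only [not_exists, not_lt] at h
    simp [not_lt.2 (h _)]

theorem rpow_mul_log_div_le {α s a : ℝ} (hα : 0 < α) (hs : 0 < s) (ha : 0 < a) :
    s ^ α * Real.log (a / s) ≤ 2 / α * a ^ (α / 2) * s ^ (α / 2) := by
  have hlog : Real.log (a / s) ≤ 2 / α * (a / s) ^ (α / 2) :=
    (Real.log_le_rpow_div (div_pos ha hs).le (half_pos hα)).trans_eq (by ring)
  have hsplit : s ^ α = s ^ (α / 2) * s ^ (α / 2) := by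
    rw [← Real.rpow_add hs, add_halves]
  calc s ^ α * Real.log (a / s) ≤ s ^ α * (2 / α * (a / s) ^ (α / 2)) :=
        mul_le_mul_of_nonneg_left hlog (by positivity)
    _ = 2 / α * a ^ (α / 2) * s ^ (α / 2) := by
        rw [Real.div_rpow ha.le hs.le, hsplit]
        field_simp

theorem tsum_rpow_mul_log_le {ε α a : ℝ} (hε0 : 0 < ε) (hε1 : ε < 1) (hα : 0 < α) (ha : 0 < a) :
    ∑' i : ℕ, ENNReal.ofReal (ε ^ (α * ((i : ℝ) + 1)))
        * ENNReal.ofReal (Real.log (ε ^ (-((i : ℝ) + 1)) * a))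
      ≤ ENNReal.ofReal (2 / α * (1 - ε ^ (α / 2))⁻¹ * a ^ α) := by
  set r : ℝ := ε ^ (α / 2)
  have hr0 : 0 < r := by positivity
  have hr1 : r < 1 := Real.rpow_lt_one hε0.le hε1 (half_pos hα)
  set b : ℝ≥0∞ := ENNReal.ofReal (a ^ (α / 2))
  set G : ℕ → ℝ≥0∞ := fun j => if ENNReal.ofReal r ^ j < b then ENNReal.ofReal r ^ j else 0
  have hterm : ∀ j : ℕ,
      ENNReal.ofReal (ε ^ (α * j)) * ENNReal.ofReal (Real.log (ε ^ (-(j : ℝ)) * a))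
        ≤ ENNReal.ofReal (2 / α * a ^ (α / 2)) * G j := by
    intro j
    set s : ℝ := ε ^ (j : ℝ)
    have hs : 0 < s := by positivity
    have hrj : ENNReal.ofReal r ^ j = ENNReal.ofReal (s ^ (α / 2)) := by
      rw [← ENNReal.ofReal_pow hr0.le, ← Real.rpow_natCast, ← Real.rpow_mul hε0.le,
        ← Real.rpow_mul hε0.le, mul_comm]
    have hsα : ε ^ (α * j) = s ^ α := by rw [mul_comm, Real.rpow_mul hε0.le]
    have hlog : ε ^ (-(j : ℝ)) * a = a / s := by rw [Real.rpow_neg hε0.le, inv_mul_eq_div]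
    rw [hsα, hlog, ← ENNReal.ofReal_mul (by positivity)]
    simp only [G, hrj]
    split_ifs with hsa
    · rw [← ENNReal.ofReal_mul (by positivity)]
      exact ENNReal.ofReal_le_ofReal (rpow_mul_log_div_le hα hs ha)
    · have has : a ≤ s := by
        rwa [not_lt, ENNReal.ofReal_le_ofReal_iff (by positivity),
          Real.rpow_le_rpow_iff ha.le hs.le (half_pos hα)] at hsa
      rw [ENNReal.ofReal_of_nonpos (mul_nonpos_of_nonneg_of_nonpos (by positivity)
        (Real.log_nonpos (div_pos ha hs).le ((div_le_one hs).2 has))), mul_zero]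
  have hone : (1 - ENNReal.ofReal r)⁻¹ = ENNReal.ofReal (1 - r)⁻¹ := by
    rw [ENNReal.ofReal_inv_of_pos (sub_pos.2 hr1), ENNReal.ofReal_sub _ hr0.le, ENNReal.ofReal_one]
  calc ∑' i : ℕ, ENNReal.ofReal (ε ^ (α * ((i : ℝ) + 1)))
          * ENNReal.ofReal (Real.log (ε ^ (-((i : ℝ) + 1)) * a))
        ≤ ∑' i : ℕ, ENNReal.ofReal (2 / α * a ^ (α / 2)) * G (i + 1) :=
          ENNReal.tsum_le_tsum fun i => by exact_mod_cast hterm (i + 1)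
    _ ≤ ∑' j : ℕ, ENNReal.ofReal (2 / α * a ^ (α / 2)) * G j :=
          ENNReal.tsum_comp_le_tsum_of_injective (add_left_injective 1) _
    _ ≤ ENNReal.ofReal (2 / α * a ^ (α / 2)) * (b * (1 - ENNReal.ofReal r)⁻¹) := by
          rw [ENNReal.tsum_mul_left]
          gcongr
          exact ENNReal.tsum_ite_pow_lt_le (ENNReal.ofReal_le_one.2 hr1.le) b
    _ = ENNReal.ofReal (2 / α * (1 - r)⁻¹ * a ^ α) := by
          rw [hone, ← ENNReal.ofReal_mul (by positivity), ← ENNReal.ofReal_mul (by positivity)]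
          congr 1
          have hsq : a ^ (α / 2) * a ^ (α / 2) = a ^ α := by rw [← Real.rpow_add ha, add_halves]
          rw [← hsq]
          ring

theorem rpow_le_two_rpow_max_mul_rpow {s t : ℝ} (hs : 0 < s) (hst : s ≤ t) (ht : t ≤ 2 * s)
    (ν : ℝ) : t ^ ν ≤ 2 ^ max ν 0 * s ^ ν := by
  rcases le_total 0 ν with hν | hν
  · rw [max_eq_left hν, ← Real.mul_rpow zero_le_two hs.le]
    exact Real.rpow_le_rpow (hs.le.trans hst) ht hν
  · rw [max_eq_right hν, Real.rpow_zero, one_mul]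
    exact Real.rpow_le_rpow_of_nonpos hs hst hν

section Wolff

variable {n : ℕ} {p : ℝ} (μ : Measure (EuclideanSpace ℝ (Fin n))) (x : EuclideanSpace ℝ (Fin n))

@[fun_prop]
theorem measurable_wolffIntegrand : Measurable (wolffIntegrand n p μ x) :=
  ((show Monotone fun t => μ (ball x t) from
    fun _ _ h => measure_mono (ball_subset_ball h)).measurable.div (by fun_prop)).pow_const _

theorem wolffIntegrand_le_mul_wolffIntegrand_of_le_two_mul (hp : 1 < p) {s t : ℝ} (hs : 0 < s)
    (hst : s ≤ t) (ht : t ≤ 2 * s) :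
    wolffIntegrand n p μ x s
      ≤ ENNReal.ofReal ((2 ^ max ((n : ℝ) - 1) 0) ^ (1 / (p - 1))) * wolffIntegrand n p μ x t := by
  set M : ℝ := 2 ^ max ((n : ℝ) - 1) 0
  have hM : 0 < M := by positivity
  have hM' : ENNReal.ofReal M ≠ 0 := by simpa using hM
  have hquot : μ (ball x s) / ENNReal.ofReal (s ^ ((n : ℝ) - 1))
      ≤ ENNReal.ofReal M * (μ (ball x t) / ENNReal.ofReal (t ^ ((n : ℝ) - 1))) := by
    rw [← ENNReal.mul_div_mul_left _ _ hM' ENNReal.ofReal_ne_top, ← ENNReal.ofReal_mul hM.le,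
      ← mul_div_assoc]
    exact ENNReal.div_le_div (by gcongr)
      (ENNReal.ofReal_le_ofReal (rpow_le_two_rpow_max_mul_rpow hs hst ht _))
  have hq : 0 ≤ 1 / (p - 1) := one_div_nonneg.2 (sub_nonneg.2 hp.le)
  rw [← ENNReal.ofReal_rpow_of_pos hM, wolffIntegrand, wolffIntegrand,
    ← ENNReal.mul_rpow_of_nonneg _ _ hq]
  exact ENNReal.rpow_le_rpow hquot hq

theorem wolffIntegrand_le_mul_wolffPotential (hp : 1 < p) {s : ℝ} (hs : 0 < s) :
    wolffIntegrand n p μ x s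
      ≤ ENNReal.ofReal ((2 ^ max ((n : ℝ) - 1) 0) ^ (1 / (p - 1)) / Real.log 2)
        * wolffPotential n p μ x (2 * s) := by
  set K : ℝ := (2 ^ max ((n : ℝ) - 1) 0) ^ (1 / (p - 1))
  have hlog2 : 0 < Real.log 2 := Real.log_pos one_lt_two
  have hmean : wolffIntegrand n p μ x s * ENNReal.ofReal (Real.log 2)
      ≤ ENNReal.ofReal K * wolffPotential n p μ x (2 * s) :=
    calc wolffIntegrand n p μ x s * ENNReal.ofReal (Real.log 2)
        = ∫⁻ t in Ioo s (2 * s), wolffIntegrand n p μ x s * (ENNReal.ofReal t)⁻¹ := by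
          rw [lintegral_const_mul _ (by fun_prop), setLIntegral_Ioo_inv_ofReal hs (by linarith),
            mul_div_cancel_right₀ 2 hs.ne']
      _ ≤ ∫⁻ t in Ioo s (2 * s),
            ENNReal.ofReal K * (wolffIntegrand n p μ x t / ENNReal.ofReal t) :=
          setLIntegral_mono (by fun_prop) fun t ht => by
            rw [← mul_div_assoc, div_eq_mul_inv]
            gcongr
            exact wolffIntegrand_le_mul_wolffIntegrand_of_le_two_mul μ x hp hs ht.1.le ht.2.le
      _ = ENNReal.ofReal K * ∫⁻ t in Ioo s (2 * s), wolffIntegrand n p μ x t / ENNReal.ofReal t :=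
          lintegral_const_mul' _ _ ENNReal.ofReal_ne_top
      _ ≤ ENNReal.ofReal K * wolffPotential n p μ x (2 * s) := by
          gcongr
          exact lintegral_mono_set (Ioo_subset_Ioo_left hs.le)
  rwa [ENNReal.ofReal_div_of_pos hlog2, div_eq_mul_inv, mul_right_comm, ← div_eq_mul_inv,
    ENNReal.le_div_iff_mul_le (Or.inl (by simpa using hlog2)) (Or.inl ENNReal.ofReal_ne_top)]

end Wolff

/-- `∫_0^ρ h̃(x,t)/t dt ≤ W̃^ρ_{1/p,p}(μ)(x) + C (ρ/R)^{α₁} W^R_{1/p,p}(μ)(x)` with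
`C = C(ε, α₁)`, where `h̃` and `W̃` are the geometric tail sums of `h` and `W` (the sum runs
over `i ≥ 1`, written below as `i + 1` with `i : ℕ`). -/
theorem tail_wolff_integral_bound (n : ℕ) (p ε α₁ : ℝ)
    (hp : 1 < p) (hε0 : 0 < ε) (hε1 : ε < 1) (hα : 0 < α₁) :
    ∃ C : ℝ, 0 < C ∧
      ∀ (μ : Measure (EuclideanSpace ℝ (Fin n))) [IsLocallyFiniteMeasure μ]
        (R : ℝ), 0 < R → ∀ (x : EuclideanSpace ℝ (Fin n)) (ρ : ℝ), 0 < ρ → ρ ≤ R / 2 →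
        (∫⁻ t in Ioo (0:ℝ) ρ,
            (∑' i : ℕ, ENNReal.ofReal (ε ^ (α₁ * ((i:ℝ) + 1))) *
              (if ε ^ (-((i:ℝ) + 1)) * t ≤ R / 2
                then wolffIntegrand n p μ x (ε ^ (-((i:ℝ) + 1)) * t)
                else wolffIntegrand n p μ x (R / 2))) / ENNReal.ofReal t)
          ≤ (∑' i : ℕ, ENNReal.ofReal (ε ^ (α₁ * ((i:ℝ) + 1))) *
              (if ε ^ (-((i:ℝ) + 1)) * ρ ≤ R / 2
                then wolffPotential n p μ x (ε ^ (-((i:ℝ) + 1)) * ρ)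
                else wolffPotential n p μ x (R / 2)))
            + ENNReal.ofReal (C * (ρ / R) ^ α₁) * wolffPotential n p μ x R := by
  set K : ℝ := (2 ^ max ((n : ℝ) - 1) 0) ^ (1 / (p - 1)) / Real.log 2
  set C' : ℝ := 2 / α₁ * (1 - ε ^ (α₁ / 2))⁻¹
  have hK : 0 < K := div_pos (by positivity) (Real.log_pos one_lt_two)
  have hC' : 0 < C' :=
    mul_pos (by positivity) (inv_pos.2 (sub_pos.2 (Real.rpow_lt_one hε0.le hε1 (half_pos hα))))
  refine ⟨K * C' * 2 ^ α₁, by positivity, ?_⟩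
  intro μ _ R hR x ρ hρ _
  have hR2 : 0 < R / 2 := half_pos hR
  simp only [← apply_ite, ← min_def]
  rw [setLIntegral_Ioo_tsum_comp_min_mul_div (measurable_wolffIntegrand μ x) hR2 hρ.le _
    fun i => by positivity]
  refine add_le_add le_rfl ?_
  calc _ ≤ ENNReal.ofReal K * wolffPotential n p μ x R
          * ENNReal.ofReal (C' * (ρ / (R / 2)) ^ α₁) := by
        gcongr
        · simpa only [mul_div_cancel₀ R two_ne_zero] using
            wolffIntegrand_le_mul_wolffPotential μ x hp hR2
        · simpa only [mul_div_assoc] using tsum_rpow_mul_log_le hε0 hε1 hα (by positivity)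
    _ = _ := by
        have hscale : (ρ / (R / 2)) ^ α₁ = 2 ^ α₁ * (ρ / R) ^ α₁ := by
          rw [← Real.mul_rpow zero_le_two (by positivity)]
          ring_nf
        rw [mul_right_comm, ← ENNReal.ofReal_mul (by positivity), hscale]
        congr 2
        ring
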